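/- For every real x and every local point xⁱ, the function h admits the concave second-order lower bound h(x) ≥ h(xⁱ) + h′(xⁱ)·(x − xⁱ) − (ε/2)·(x − xⁱ)², where h′(xⁱ) = Σ_{a=1}^{L−1} Σ_{b=a+1}^{L} (−(4π·P_t·|Y_{ab}|·ϑ_{ab})/λ)·sin((2π/λ)·xⁱ·ϑ_{ab} + arg Y_{ab}) and ε = Σ_{a=1}^{L−1} Σ_{b=a+1}^{L} (8π²·P_t·|Y_{ab}|·ϑ_{ab}²)/λ². -/

import Mathlib

open Real Complex Finset

/-!
Since `cos'' = -cos ≥ -1`, the function `s ↦ cos s + s² / 2` is convex, so it lies above its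
tangent lines. Substituting `s = ω x + φ`, each summand `A cos (ω x + φ)` with
`A = 2 P_t |Y_ab| ≥ 0` lies above its tangent line at `xⁱ` minus `(A ω² / 2) (x - xⁱ)²`,
and these curvature terms add up to `ε / 2`.
-/

theorem ConvexOn.add_mul_sub_le_of_hasDerivAt {S : Set ℝ} {f : ℝ → ℝ} {f' x y : ℝ}
    (hf : ConvexOn ℝ S f) (hx : x ∈ S) (hy : y ∈ S) (hf' : HasDerivAt f f' x) :
    f x + f' * (y - x) ≤ f y := by
  rcases lt_trichotomy x y with hxy | rfl | hyx
  · have := hf.le_slope_of_hasDerivAt hx hy hxy hf'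
    rw [slope_def_field, le_div_iff₀ (sub_pos.2 hxy)] at this
    linarith
  · simp
  · have := hf.slope_le_of_hasDerivAt hy hx hyx hf'
    rw [slope_def_field, div_le_iff₀ (sub_pos.2 hyx)] at this
    linarith

theorem Real.convexOn_cos_add_sq_div_two (z : ℝ) :
    ConvexOn ℝ Set.univ (fun s => cos (z + s) + s ^ 2 / 2) := by
  refine convexOn_of_hasDerivWithinAt2_nonneg convex_univ (by fun_prop)
    (f' := fun s => -sin (z + s) + s) (f'' := fun s => -cos (z + s) + 1) ?_ ?_ ?_
  · intro s _
    refine HasDerivAt.hasDerivWithinAt ?_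
    have := ((hasDerivAt_id s).const_add z).cos.add ((hasDerivAt_pow 2 s).div_const 2)
    convert this using 1 <;> first | rfl | simp
  · intro s _
    refine HasDerivAt.hasDerivWithinAt ?_
    have := ((hasDerivAt_id s).const_add z).sin.neg.add (hasDerivAt_id s)
    convert this using 1 <;> first | rfl | simp
  · intro s _
    linarith [cos_le_one (z + s)]

theorem Real.cos_sub_sin_mul_sub_sq_div_two_le_cos_add (z t : ℝ) :
    cos z - sin z * t - t ^ 2 / 2 ≤ cos (z + t) := by
  have hderiv : HasDerivAt (fun s => cos (z + s) + s ^ 2 / 2) (-sin z) 0 := by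
    have := ((hasDerivAt_id (0 : ℝ)).const_add z).cos.add ((hasDerivAt_pow 2 (0 : ℝ)).div_const 2)
    convert this using 1 <;> first | rfl | simp
  have := (convexOn_cos_add_sq_div_two z).add_mul_sub_le_of_hasDerivAt
    (Set.mem_univ 0) (Set.mem_univ t) hderiv
  simp only [add_zero, sub_zero] at this
  linarith

theorem Real.mul_cos_taylor_le {A : ℝ} (hA : 0 ≤ A) (ω φ x ξ : ℝ) :
    A * cos (ω * ξ + φ) - A * ω * sin (ω * ξ + φ) * (x - ξ) - A * ω ^ 2 / 2 * (x - ξ) ^ 2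
      ≤ A * cos (ω * x + φ) := by
  have := mul_le_mul_of_nonneg_left
    (cos_sub_sin_mul_sub_sq_div_two_le_cos_add (ω * ξ + φ) (ω * (x - ξ))) hA
  rw [show ω * ξ + φ + ω * (x - ξ) = ω * x + φ by ring] at this
  linarith

theorem h_second_order_lower_bound_general
    (L : ℕ) (lam Pt : ℝ) (hPt : 0 < Pt)
    (ϑ : Fin L → ℝ) (Y : Fin L → Fin L → ℂ) (X : ℝ)
    (h h' : ℝ → ℝ)
    (hh : ∀ x, h x = Pt * X + ∑ a : Fin L, ∑ b ∈ Finset.univ.filter (fun b => a < b),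
      2 * Pt * ‖Y a b‖ *
        Real.cos (2 * π / lam * x * (ϑ b - ϑ a) + Complex.arg (Y a b)))
    (hh' : ∀ x, h' x = ∑ a : Fin L, ∑ b ∈ Finset.univ.filter (fun b => a < b),
      -(4 * π * Pt * ‖Y a b‖ * (ϑ b - ϑ a)) / lam *
        Real.sin (2 * π / lam * x * (ϑ b - ϑ a) + Complex.arg (Y a b)))
    (ε : ℝ)
    (hε : ε = ∑ a : Fin L, ∑ b ∈ Finset.univ.filter (fun b => a < b),
      8 * π ^ 2 * Pt * ‖Y a b‖ * (ϑ b - ϑ a) ^ 2 / lam ^ 2)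
    (x xi : ℝ) :
    h x ≥ h xi + h' xi * (x - xi) - ε / 2 * (x - xi) ^ 2 := by
  rw [ge_iff_le, hh x, hh xi, hh' xi, hε, add_assoc, add_sub_assoc]
  simp only [sum_mul, sum_div, ← sum_add_distrib, ← sum_sub_distrib]
  gcongr with a _ b _
  have hω (s : ℝ) : 2 * π / lam * s * (ϑ b - ϑ a) = 2 * π / lam * (ϑ b - ϑ a) * s := by ring
  rw [hω x, hω xi]
  refine le_trans (le_of_eq ?_) (mul_cos_taylor_le (by positivity) _ (arg (Y a b)) x xi)
  ring

/-- Concave second-order lower bound of `h` around the local point `xⁱ`: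
`h(x) ≥ h(xⁱ) + h'(xⁱ)·(x − xⁱ) − (ε/2)·(x − xⁱ)²`. -/
theorem h_second_order_lower_bound
    (L : ℕ) (hL : 1 ≤ L) (lam Pt : ℝ) (hlam : 0 < lam) (hPt : 0 < Pt)
    (ϑ : Fin L → ℝ) (Y : Fin L → Fin L → ℂ) (X : ℝ)
    (h h' : ℝ → ℝ)
    (hh : ∀ x, h x = Pt * X + ∑ a : Fin L, ∑ b ∈ Finset.univ.filter (fun b => a < b),
      2 * Pt * ‖Y a b‖ *
        Real.cos (2 * π / lam * x * (ϑ b - ϑ a) + Complex.arg (Y a b)))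
    (hh' : ∀ x, h' x = ∑ a : Fin L, ∑ b ∈ Finset.univ.filter (fun b => a < b),
      -(4 * π * Pt * ‖Y a b‖ * (ϑ b - ϑ a)) / lam *
        Real.sin (2 * π / lam * x * (ϑ b - ϑ a) + Complex.arg (Y a b)))
    (ε : ℝ)
    (hε : ε = ∑ a : Fin L, ∑ b ∈ Finset.univ.filter (fun b => a < b),
      8 * π ^ 2 * Pt * ‖Y a b‖ * (ϑ b - ϑ a) ^ 2 / lam ^ 2)
    (x xi : ℝ) :
    h x ≥ h xi + h' xi * (x - xi) - ε / 2 * (x - xi) ^ 2 :=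
  h_second_order_lower_bound_general L lam Pt hPt ϑ Y X h h' hh hh' ε hε x xi
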